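/- Let y_1, …, y_n be n ≥ 2 points in R^2 with minimum pairwise distance d_min, let Δ = π/(n(n+1)), and consider the n(n+1)/2 unit vectors v_q = (cos(2qΔ), sin(2qΔ)) for q = 1, …, n(n+1)/2. Then there exists an index q* such that for all p ≠ j, ||P_{v_{q*}^⊥}(y_p) − P_{v_{q*}^⊥}(y_j)||_2 ≥ 2 d_min/(n(n+1)). -/

import Mathlib

/-! For a difference vector `u` of angle `φ`, the projection onto `v_α^⊥` has length
`‖u‖ |sin (φ - α)|`. Call the step `q` bad for `u` when `|sin (φ - 2qΔ)| < sin Δ`, i.e. when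
`2qΔ` lies within `Δ` of `φ` modulo `π`. The `N = n(n+1)/2` angles `2qΔ` are `2Δ`-separated
modulo `π = 2NΔ`, so each pair of points has at most one bad step; as there are only
`n(n-1)/2 < N` pairs, some step is good for all of them, and there Jordan's inequality
`sin Δ ≥ 2Δ/π` gives the bound `d_min sin Δ ≥ 2 d_min/(n(n+1))`. -/

open Real

/-- Orthogonal projection of `u` onto the orthogonal complement of the span of `v`
(for a unit vector `v`): `P_{v^⊥}(u) = u − (u·v) v`. -/
noncomputable def projPerp {E : Type*} [NormedAddCommGroup E] [InnerProductSpace ℝ E]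
    (v u : E) : E := u - (inner ℝ u v : ℝ) • v

/-- The unit vector `(cos α, sin α)` in `ℝ²`. -/
noncomputable def dirVec (α : ℝ) : EuclideanSpace ℝ (Fin 2) :=
  (WithLp.equiv 2 (Fin 2 → ℝ)).symm ![Real.cos α, Real.sin α]

open Finset

lemma Finset.exists_forall_notMem_of_card_lt {ι α : Type*} [DecidableEq α] {s : Finset ι}
    {t : Finset α} {f : ι → Finset α} (hf : ∀ i ∈ s, #(f i) ≤ 1) (h : #s < #t) :
    ∃ a ∈ t, ∀ i ∈ s, a ∉ f i := by
  have hcard : #(s.biUnion f) < #t :=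
    calc #(s.biUnion f) ≤ ∑ i ∈ s, #(f i) := card_biUnion_le
      _ ≤ #s := by simpa using sum_le_sum hf
      _ < #t := h
  obtain ⟨a, hat, ha⟩ := exists_mem_notMem_of_card_lt_card hcard
  exact ⟨a, hat, fun i hi hai => ha (mem_biUnion.2 ⟨i, hi, hai⟩)⟩

section Projection

variable {E : Type*} [NormedAddCommGroup E] [InnerProductSpace ℝ E]

lemma projPerp_sub (v a b : E) : projPerp v a - projPerp v b = projPerp v (a - b) := by
  simp only [projPerp, inner_sub_left, sub_smul]
  abel

lemma norm_projPerp_sq {v : E} (hv : ‖v‖ = 1) (u : E) :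
    ‖projPerp v u‖ ^ 2 = ‖u‖ ^ 2 - inner ℝ u v ^ 2 := by
  rw [projPerp, norm_sub_sq_real, real_inner_smul_right, norm_smul, hv, Real.norm_eq_abs,
    mul_one, sq_abs]
  ring

end Projection

lemma norm_dirVec (α : ℝ) : ‖dirVec α‖ = 1 := by
  simp [EuclideanSpace.norm_eq, dirVec, Fin.sum_univ_two]

noncomputable def polarAngle (u : EuclideanSpace ℝ (Fin 2)) : ℝ :=
  Complex.arg (Complex.orthonormalBasisOneI.repr.symm u)

lemma inner_dirVec (u : EuclideanSpace ℝ (Fin 2)) (α : ℝ) :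
    inner ℝ u (dirVec α) = ‖u‖ * cos (polarAngle u - α) := by
  set z := Complex.orthonormalBasisOneI.repr.symm u
  have hz : ‖z‖ = ‖u‖ := LinearIsometryEquiv.norm_map _ u
  have hre : z.re = u 0 := by simp [z]
  have him : z.im = u 1 := by simp [z]
  have hinner : inner ℝ u (dirVec α) = u 0 * cos α + u 1 * sin α := by
    simp [dirVec, PiLp.inner_apply, Fin.sum_univ_two, mul_comm]
  rw [hinner, polarAngle, cos_sub, ← hz, ← hre, ← him, ← Complex.norm_mul_cos_arg,
    ← Complex.norm_mul_sin_arg]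
  ring

lemma norm_projPerp_dirVec (u : EuclideanSpace ℝ (Fin 2)) (α : ℝ) :
    ‖projPerp (dirVec α) u‖ = ‖u‖ * |sin (polarAngle u - α)| := by
  refine (sq_eq_sq₀ (norm_nonneg _) (by positivity)).1 ?_
  rw [norm_projPerp_sq (norm_dirVec α), inner_dirVec, mul_pow, mul_pow, sq_abs, sin_sq]
  ring

lemma pos_and_le_pi_div_two_of_pi_eq {N : ℕ} {Δ : ℝ} (hπ : π = 2 * N * Δ) :
    0 < Δ ∧ Δ ≤ π / 2 := by
  have hN : (1 : ℝ) ≤ N := by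
    rcases N with _ | N
    · simp [pi_ne_zero] at hπ
    · simp
  have hΔ : 0 < Δ := pos_of_mul_pos_right (hπ ▸ pi_pos) (by positivity)
  exact ⟨hΔ, by nlinarith⟩

lemma exists_abs_sub_int_mul_pi_lt {x Δ : ℝ} (hΔ : 0 ≤ Δ) (h : |sin x| < sin Δ) :
    ∃ k : ℤ, |x - k * π| < Δ := by
  refine ⟨round (x / π), ?_⟩
  set r := x - round (x / π) * π
  have hr : |r| ≤ π / 2 := by
    have h := abs_sub_round (x / π)
    have hrπ : x / π - round (x / π) = r / π := by simp only [r]; field_simp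
    rwa [hrπ, abs_div, abs_of_pos pi_pos, div_le_iff₀ pi_pos, one_div_mul_eq_div] at h
  have hsin : |sin x| = sin |r| := by
    rw [← abs_sin_eq_sin_abs_of_abs_le_pi (by linarith [pi_pos]), sin_sub_int_mul_pi, abs_mul,
      abs_neg_one_zpow, one_mul]
  by_contra! hle
  exact (sin_le_sin_of_le_of_le_pi_div_two (by linarith [pi_pos]) hr hle).not_gt (hsin ▸ h)

lemma eq_of_abs_sub_int_mul_pi_lt {N : ℕ} {Δ φ : ℝ} (hπ : π = 2 * N * Δ) {q₁ q₂ : ℕ}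
    (hq₁ : q₁ ∈ Icc 1 N) (hq₂ : q₂ ∈ Icc 1 N) {k₁ k₂ : ℤ}
    (h₁ : |φ - 2 * q₁ * Δ - k₁ * π| < Δ) (h₂ : |φ - 2 * q₂ * Δ - k₂ * π| < Δ) : q₁ = q₂ := by
  have hΔ := (pos_and_le_pi_div_two_of_pi_eq hπ).1
  set M : ℤ := (q₂ - q₁) + (k₂ - k₁) * N
  have hM : |(M : ℝ)| < 1 := by
    have h : |2 * Δ * M| < 2 * Δ := by
      calc |2 * Δ * M| = |(φ - 2 * q₁ * Δ - k₁ * π) - (φ - 2 * q₂ * Δ - k₂ * π)| := by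
            rw [hπ]; push_cast [M]; ring_nf
        _ < 2 * Δ := by linarith [abs_sub (φ - 2 * q₁ * Δ - k₁ * π) (φ - 2 * q₂ * Δ - k₂ * π)]
    rwa [abs_mul, abs_of_pos (by positivity : 0 < 2 * Δ),
      mul_lt_iff_lt_one_right (by positivity)] at h
  have hM0 : M = 0 := Int.abs_lt_one_iff.1 (by exact_mod_cast hM)
  have hdvd : (N : ℤ) ∣ (q₂ : ℤ) - q₁ := ⟨k₁ - k₂, by linear_combination hM0⟩
  have hlt : |(q₂ : ℤ) - q₁| < N := by
    rw [mem_Icc] at hq₁ hq₂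
    rw [abs_lt]; omega
  have := Int.eq_zero_of_abs_lt_dvd hdvd hlt
  omega

noncomputable def badSteps (N : ℕ) (Δ φ : ℝ) : Finset ℕ :=
  {q ∈ Icc 1 N | |sin (φ - 2 * q * Δ)| < sin Δ}

lemma card_badSteps_le_one {N : ℕ} {Δ : ℝ} (hπ : π = 2 * N * Δ) (φ : ℝ) :
    #(badSteps N Δ φ) ≤ 1 := by
  have hΔ := (pos_and_le_pi_div_two_of_pi_eq hπ).1
  refine card_le_one.2 fun q₁ h₁ q₂ h₂ => ?_
  rw [badSteps, mem_filter] at h₁ h₂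
  obtain ⟨k₁, hk₁⟩ := exists_abs_sub_int_mul_pi_lt hΔ.le h₁.2
  obtain ⟨k₂, hk₂⟩ := exists_abs_sub_int_mul_pi_lt hΔ.le h₂.2
  exact eq_of_abs_sub_int_mul_pi_lt hπ h₁.1 h₂.1 hk₁ hk₂

lemma two_div_pi_mul_le_norm_projPerp_dirVec {Δ α d : ℝ} (hΔ : 0 ≤ Δ) (hΔπ : Δ ≤ π / 2)
    {u : EuclideanSpace ℝ (Fin 2)} (hd : 0 ≤ d) (hu : d ≤ ‖u‖)
    (hα : sin Δ ≤ |sin (polarAngle u - α)|) :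
    2 / π * Δ * d ≤ ‖projPerp (dirVec α) u‖ := by
  rw [norm_projPerp_dirVec, mul_comm ‖u‖]
  exact mul_le_mul ((mul_le_sin hΔ hΔπ).trans hα) hu hd (abs_nonneg _)

/-- For `n ≥ 2` points in `ℝ²` with minimum pairwise distance `d_min > 0`, with
`Δ = π/(n(n+1))` and the unit vectors `v_q = (cos 2qΔ, sin 2qΔ)`, `q = 1, …, n(n+1)/2`,
there exists `q*` such that all projected pairwise distances onto `v_{q*}^⊥` are at least
`2 d_min/(n(n+1))`. -/
theorem exists_good_direction_two_dim (n : ℕ) (hn : 2 ≤ n)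
    (y : Fin n → EuclideanSpace ℝ (Fin 2)) (dmin : ℝ) (hdmin : 0 < dmin)
    (hsep : ∀ p j, p ≠ j → dmin ≤ ‖y p - y j‖) :
    ∃ q : ℕ, 1 ≤ q ∧ q ≤ n * (n + 1) / 2 ∧
      ∀ p j, p ≠ j →
        2 * dmin / ((n : ℝ) * ((n : ℝ) + 1)) ≤
          ‖projPerp (dirVec (2 * (q : ℝ) * (Real.pi / ((n : ℝ) * ((n : ℝ) + 1))))) (y p) -
            projPerp (dirVec (2 * (q : ℝ) * (Real.pi / ((n : ℝ) * ((n : ℝ) + 1))))) (y j)‖ := by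
  set N := (n + 1).choose 2 with hN
  set Δ := π / ((n : ℝ) * ((n : ℝ) + 1)) with hΔ
  have hπ : π = 2 * N * Δ := by
    rw [hN, Nat.cast_choose_two, hΔ]
    push_cast
    field_simp
    ring
  obtain ⟨hΔ₀, hΔ₁⟩ := pos_and_le_pi_div_two_of_pi_eq hπ
  have hpairs : #({x : Fin n × Fin n | x.1 < x.2} : Finset _) < #(Icc 1 N) := by
    have hsucc : (n + 1).choose 2 = n.choose 2 + n := by
      simp [Nat.choose_succ_succ', add_comm]
    rw [Fintype.card_product_filter_lt, Fintype.card_fin, Nat.card_Icc, hN, hsucc]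
    omega
  obtain ⟨q, hq, hgood⟩ := exists_forall_notMem_of_card_lt
    (fun x _ => card_badSteps_le_one hπ (polarAngle (y x.1 - y x.2))) hpairs
  rw [mem_Icc] at hq
  have hN' : N = n * (n + 1) / 2 := by rw [hN, Nat.choose_two_right, Nat.add_sub_cancel, mul_comm]
  refine ⟨q, hq.1, hN' ▸ hq.2, ?_⟩
  have hbound : ∀ p j, p < j → 2 * dmin / ((n : ℝ) * ((n : ℝ) + 1)) ≤
      ‖projPerp (dirVec (2 * q * Δ)) (y p) - projPerp (dirVec (2 * q * Δ)) (y j)‖ := by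
    intro p j hpj
    have hsin : sin Δ ≤ |sin (polarAngle (y p - y j) - 2 * q * Δ)| := not_lt.1 fun h =>
      hgood (p, j) (by simpa using hpj) (mem_filter.2 ⟨mem_Icc.2 hq, h⟩)
    rw [projPerp_sub]
    convert two_div_pi_mul_le_norm_projPerp_dirVec hΔ₀.le hΔ₁ hdmin.le (hsep p j hpj.ne) hsin
      using 1
    rw [hΔ]
    field_simp
  intro p j hpj
  rcases hpj.lt_or_gt with h | h
  · exact hbound p j h
  · rw [norm_sub_rev]
    exact hbound j p h
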